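/- (General Magnification) Let M/K be obtained by strong general magnification from L/K through J/K, with magnification tuple (r, s, t, u) = (r_K(J), s_K(J), t_K(J), u_K(J)). Then [M:K] = r·s·[L:K] = t·u·[L:K], and r_K(M) = r·r_K(L), s_K(M) = s·s_K(L), t_K(M) = t·t_K(L), u_K(M) = u·u_K(L). -/

import Mathlib

open IntermediateField Module

section Defs

variable (K Kbar : Type*) [Field K] [Field Kbar] [Algebra K Kbar]

/-- The Galois closure inside the ambient field `Kbar` of an intermediate field `L` of
`Kbar / K`: the compositum of all the `K`-conjugates of `L` in `Kbar`. -/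
noncomputable def galClosure (L : IntermediateField K Kbar) : IntermediateField K Kbar :=
  ⨆ f : ↥L →ₐ[K] Kbar, f.fieldRange

/-- The subgroup `H = Gal(L̃/L)` of `G = Gal(L̃/K)`. -/
noncomputable def fixSub (L : IntermediateField K Kbar) :
    Subgroup (↥(galClosure K Kbar L) ≃ₐ[K] ↥(galClosure K Kbar L)) :=
  (IntermediateField.comap (galClosure K Kbar L).val L).fixingSubgroup

/-- The cluster size `r_K(L) = [N_G(H) : H]`. -/
noncomputable def clusterSize (L : IntermediateField K Kbar) : ℕ :=
  (fixSub K Kbar L).relIndex (Subgroup.normalizer (fixSub K Kbar L : Set (↥(galClosure K Kbar L) ≃ₐ[K] ↥(galClosure K Kbar L))))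

/-- The number of clusters `s_K(L) = [G : N_G(H)]`. -/
noncomputable def numClusters (L : IntermediateField K Kbar) : ℕ :=
  (Subgroup.normalizer (fixSub K Kbar L : Set (↥(galClosure K Kbar L) ≃ₐ[K] ↥(galClosure K Kbar L)))).index

/-- The ascending index `t_K(L) = [G : H^G]`. -/
noncomputable def ascIndex (L : IntermediateField K Kbar) : ℕ :=
  (Subgroup.normalClosure (fixSub K Kbar L :
      Set (↥(galClosure K Kbar L) ≃ₐ[K] ↥(galClosure K Kbar L)))).index

/-- The quantity `u_K(L) = [H^G : H]`. -/
noncomputable def uIndex (L : IntermediateField K Kbar) : ℕ :=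
  (fixSub K Kbar L).relIndex (Subgroup.normalClosure (fixSub K Kbar L :
      Set (↥(galClosure K Kbar L) ≃ₐ[K] ↥(galClosure K Kbar L))))

/-- `M/K` is obtained by strong cluster magnification from `L/K` through `F/K`. -/
def IsSCMvia (M L F : IntermediateField K Kbar) : Prop :=
  L ≤ M ∧ 2 < Module.finrank K ↥L ∧ FiniteDimensional K ↥F ∧ IsGalois K ↥F ∧
    galClosure K Kbar L ⊓ F = ⊥ ∧ L ⊔ F = M

/-- `M/K` is primitive: it is not obtained by a nontrivial strong cluster magnification
from any subextension over `K`. -/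
def IsPrimitive (M : IntermediateField K Kbar) : Prop :=
  ¬ ∃ L F : IntermediateField K Kbar, IsSCMvia K Kbar M L F ∧ F ≠ ⊥

/-- `M/K` is obtained by strong general magnification from `L/K` through `J/K`. -/
def IsSGMvia (M L J : IntermediateField K Kbar) : Prop :=
  L ≤ M ∧ 1 < Module.finrank K ↥L ∧ FiniteDimensional K ↥J ∧
    galClosure K Kbar L ⊓ galClosure K Kbar J = ⊥ ∧ L ⊔ J = M

/-- `M/K` is general primitive: not obtained by a nontrivial strong general magnification
from any subextension over `K`. -/
def IsGeneralPrimitive (M : IntermediateField K Kbar) : Prop :=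
  ¬ ∃ L J : IntermediateField K Kbar, IsSGMvia K Kbar M L J ∧ J ≠ ⊥

/-- `F/E` is a Galois pair of intermediate fields: `E ≤ F` and `F/E` is Galois. -/
def IsGaloisPair (E F : IntermediateField K Kbar) : Prop :=
  ∃ h : E ≤ F, IsGalois ↥E ↥(IntermediateField.extendScalars h)

/-- One step of the unique descending chain: `N'` is an intermediate field of `N/K` such
that `N/N'` is Galois of maximal possible degree. -/
def DescStep (N N' : IntermediateField K Kbar) : Prop :=
  N' ≤ N ∧ IsGaloisPair K Kbar N' N ∧
    ∀ N'' : IntermediateField K Kbar, N'' ≤ N → IsGaloisPair K Kbar N'' N →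
      Module.finrank K ↥N' ≤ Module.finrank K ↥N''

/-- One step of the unique ascending chain for `L/K`: `F'` is an intermediate field of
`L/F` such that `F'/F` is Galois of maximal possible degree. -/
def AscStep (L F F' : IntermediateField K Kbar) : Prop :=
  F ≤ F' ∧ F' ≤ L ∧ IsGaloisPair K Kbar F F' ∧
    ∀ F'' : IntermediateField K Kbar, F ≤ F'' → F'' ≤ L → IsGaloisPair K Kbar F F'' →
      Module.finrank K ↥F'' ≤ Module.finrank K ↥F'

/-- `E` occurs in the unique descending chain of `L/K`. -/
def InDescChain (L E : IntermediateField K Kbar) : Prop :=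
  Relation.ReflTransGen (DescStep K Kbar) L E

/-- `E` occurs in the unique ascending chain of `L/K`. -/
def InAscChain (L E : IntermediateField K Kbar) : Prop :=
  Relation.ReflTransGen (AscStep K Kbar L) ⊥ E

end Defs

/-!
Restriction to `L̃` and `J̃` embeds `Gal(M̃/K)` into `Gal(L̃/K) × Gal(J̃/K)`, because `M̃ = L̃ J̃`;
the embedding is onto by counting, since `L̃ ∩ J̃ = K` makes the Galois extensions `L̃` and `J̃`
linearly disjoint. An automorphism of `M̃` fixes `M = L J` iff its two restrictions fix `L` and
`J`, so `Gal(M̃/M)` corresponds to `Gal(L̃/L) × Gal(J̃/J)`. Normalizers and normal closures of a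
product of subgroups are the products of the normalizers and normal closures, and indices are
multiplicative over products; this gives all four identities, and `[M:K] = [J:K] [L:K]` with
`[J:K] = r s = t u`.
-/

namespace Subgroup

variable {G G₁ G₂ : Type*} [Group G] [Group G₁] [Group G₂]

theorem normalizer_prod (H₁ : Subgroup G₁) (H₂ : Subgroup G₂) :
    normalizer ((H₁.prod H₂ : Subgroup (G₁ × G₂)) : Set (G₁ × G₂)) =
      (normalizer (H₁ : Set G₁)).prod (normalizer (H₂ : Set G₂)) := by
  ext ⟨g₁, g₂⟩
  simp only [mem_normalizer_iff, mem_prod, Prod.forall, Prod.mk_mul_mk, Prod.inv_mk]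
  exact ⟨fun h ↦ ⟨fun a ↦ by simpa [H₂.one_mem] using h a 1,
    fun b ↦ by simpa [H₁.one_mem] using h 1 b⟩, fun h a b ↦ and_congr (h.1 a) (h.2 b)⟩

theorem normalClosure_prod (H₁ : Subgroup G₁) (H₂ : Subgroup G₂) :
    normalClosure ((H₁.prod H₂ : Subgroup (G₁ × G₂)) : Set (G₁ × G₂)) =
      (normalClosure (H₁ : Set G₁)).prod (normalClosure (H₂ : Set G₂)) := by
  refine le_antisymm (normalClosure_le_normal (prod_mono le_normalClosure le_normalClosure)) ?_
  rw [prod_le_iff, map_le_iff_le_comap, map_le_iff_le_comap]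
  exact ⟨normalClosure_le_normal fun a ha ↦ subset_normalClosure ⟨ha, H₂.one_mem⟩,
    normalClosure_le_normal fun b hb ↦ subset_normalClosure ⟨H₁.one_mem, hb⟩⟩

theorem relIndex_prod (H₁ K₁ : Subgroup G₁) (H₂ K₂ : Subgroup G₂) :
    (H₁.prod H₂).relIndex (K₁.prod K₂) = H₁.relIndex K₁ * H₂.relIndex K₂ := by
  have hcomap : ((H₁.subgroupOf K₁).prod (H₂.subgroupOf K₂)).comap (K₁.prodEquiv K₂).toMonoidHom =
      (H₁.prod H₂).subgroupOf (K₁.prod K₂) := rfl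
  rw [relIndex, relIndex, relIndex, ← index_prod, ← hcomap,
    index_comap_of_surjective _ (K₁.prodEquiv K₂).surjective]

variable (e : G ≃* G₁ × G₂) {H : Subgroup G} {H₁ : Subgroup G₁} {H₂ : Subgroup G₂}

theorem index_eq_mul_of_map_eq_prod (h : H.map (e : G →* G₁ × G₂) = H₁.prod H₂) :
    H.index = H₁.index * H₂.index := by
  rw [← index_map_equiv H e, h, index_prod]

theorem relIndex_eq_mul_of_map_eq_prod {K : Subgroup G} {K₁ : Subgroup G₁} {K₂ : Subgroup G₂}
    (hH : H.map (e : G →* G₁ × G₂) = H₁.prod H₂) (hK : K.map (e : G →* G₁ × G₂) = K₁.prod K₂) :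
    H.relIndex K = H₁.relIndex K₁ * H₂.relIndex K₂ := by
  rw [← relIndex_map_map_of_injective (f := (e : G →* G₁ × G₂)) H K e.injective, hH, hK,
    relIndex_prod]

theorem normalizer_map_eq_prod (h : H.map (e : G →* G₁ × G₂) = H₁.prod H₂) :
    (normalizer (H : Set G)).map (e : G →* G₁ × G₂) =
      (normalizer (H₁ : Set G₁)).prod (normalizer (H₂ : Set G₂)) := by
  rw [← normalizer_prod, ← h]
  exact map_equiv_normalizer_eq H e

theorem normalClosure_map_eq_prod (h : H.map (e : G →* G₁ × G₂) = H₁.prod H₂) :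
    (normalClosure (H : Set G)).map (e : G →* G₁ × G₂) =
      (normalClosure (H₁ : Set G₁)).prod (normalClosure (H₂ : Set G₂)) := by
  rw [map_normalClosure _ _ e.surjective, ← coe_map, h, normalClosure_prod]

end Subgroup

namespace IntermediateField

variable {K Kbar : Type*} [Field K] [Field Kbar] [Algebra K Kbar]

theorem comap_val_eq_restrict {X N : IntermediateField K Kbar} (h : X ≤ N) :
    comap N.val X = restrict h :=
  ext fun x ↦ (mem_restrict h x).symm

theorem comap_val_self (N : IntermediateField K Kbar) : comap N.val N = ⊤ :=
  eq_top_iff.2 fun x _ ↦ x.2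

theorem comap_val_sup {A B N : IntermediateField K Kbar} (hA : A ≤ N) (hB : B ≤ N) :
    comap N.val (A ⊔ B) = comap N.val A ⊔ comap N.val B := by
  rw [comap_val_eq_restrict hA, comap_val_eq_restrict hB, comap_val_eq_restrict (sup_le hA hB),
    ← lift_inj, lift_sup, lift_restrict, lift_restrict, lift_restrict]

section restrictGal

variable {A N : IntermediateField K Kbar} (h : A ≤ N) [Normal K A]

noncomputable def restrictGal : Gal(N/K) →* Gal(A/K) :=
  haveI : Normal K (restrict h) := Normal.of_algEquiv (restrictAlgEquiv h)
  (AlgEquiv.autCongr (restrictAlgEquiv h).symm).toMonoidHom.comp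
    (AlgEquiv.restrictNormalHom (restrict h))

theorem restrictGal_apply (σ : Gal(N/K)) (x : A) :
    (restrictGal h σ x : Kbar) = σ (inclusion h x) := by
  have : Normal K (restrict h) := Normal.of_algEquiv (restrictAlgEquiv h)
  have coe_symm (y : restrict h) : ((restrictAlgEquiv h).symm y : Kbar) = ((y : N) : Kbar) := by
    conv_rhs => rw [← (restrictAlgEquiv h).apply_symm_apply y]
    rfl
  have hres := AlgEquiv.restrictNormalHom_apply (restrict h) σ (restrictAlgEquiv h x)
  exact (coe_symm _).trans congr(($hres : Kbar))

theorem comap_restrictGal_fixingSubgroup {X : IntermediateField K Kbar} (hX : X ≤ A) :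
    (comap A.val X).fixingSubgroup.comap (restrictGal h) = (comap N.val X).fixingSubgroup := by
  ext σ
  simp only [Subgroup.mem_comap, mem_fixingSubgroup_iff, Subtype.ext_iff, restrictGal_apply]
  exact ⟨fun hσ y hy ↦ hσ ⟨y, hX hy⟩ hy, fun hσ x hx ↦ hσ (inclusion h x) hx⟩

end restrictGal

variable {A B N : IntermediateField K Kbar}

theorem fixingSubgroup_comap_val_sup (hA : A ≤ N) (hB : B ≤ N) [Normal K A] [Normal K B]
    {X Y : IntermediateField K Kbar} (hX : X ≤ A) (hY : Y ≤ B) :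
    (comap N.val (X ⊔ Y)).fixingSubgroup =
      ((comap A.val X).fixingSubgroup.prod (comap B.val Y).fixingSubgroup).comap
        ((restrictGal hA).prod (restrictGal hB)) := by
  rw [comap_val_sup (hX.trans hA) (hY.trans hB), fixingSubgroup_sup,
    ← comap_restrictGal_fixingSubgroup hA hX, ← comap_restrictGal_fixingSubgroup hB hY]
  rfl

theorem restrictGal_prod_injective (hN : A ⊔ B = N) [Normal K A] [Normal K B] :
    Function.Injective ((restrictGal (le_sup_left.trans hN.le)).prod
      (restrictGal (le_sup_right.trans hN.le))) := by
  have h := fixingSubgroup_comap_val_sup (le_sup_left.trans hN.le) (le_sup_right.trans hN.le)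
    le_rfl le_rfl
  simp only [hN, comap_val_self, fixingSubgroup_top, Subgroup.bot_prod_bot,
    MonoidHom.comap_bot] at h
  exact (MonoidHom.ker_eq_bot_iff _).1 h.symm

theorem restrictGal_prod_bijective (hN : A ⊔ B = N) (hAB : A ⊓ B = ⊥)
    [FiniteDimensional K A] [FiniteDimensional K B] [FiniteDimensional K N]
    [IsGalois K A] [IsGalois K B] [IsGalois K N] :
    Function.Bijective ((restrictGal (le_sup_left.trans hN.le)).prod
      (restrictGal (le_sup_right.trans hN.le))) := by
  refine (restrictGal_prod_injective hN).bijective_of_nat_card_le ?_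
  rw [Nat.card_prod, IsGalois.card_aut_eq_finrank, IsGalois.card_aut_eq_finrank,
    IsGalois.card_aut_eq_finrank, ← hN, (LinearDisjoint.of_inf_eq_bot hAB).finrank_sup]

noncomputable def restrictGalProdEquiv (hN : A ⊔ B = N) (hAB : A ⊓ B = ⊥)
    [FiniteDimensional K A] [FiniteDimensional K B] [FiniteDimensional K N]
    [IsGalois K A] [IsGalois K B] [IsGalois K N] :
    Gal(N/K) ≃* Gal(A/K) × Gal(B/K) :=
  MulEquiv.ofBijective _ (restrictGal_prod_bijective hN hAB)

end IntermediateField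

section galClosure

variable {K Kbar : Type*} [Field K] [Field Kbar] [Algebra K Kbar]

theorem le_galClosure (X : IntermediateField K Kbar) : X ≤ galClosure K Kbar X :=
  le_normalClosure X

instance [Normal K Kbar] (X : IntermediateField K Kbar) : Normal K (galClosure K Kbar X) :=
  normalClosure.normal K X Kbar

instance [IsGalois K Kbar] (X : IntermediateField K Kbar) : IsGalois K (galClosure K Kbar X) :=
  IsGalois.normalClosure K X Kbar

instance (X : IntermediateField K Kbar) [FiniteDimensional K X] :
    FiniteDimensional K (galClosure K Kbar X) :=
  inferInstanceAs (FiniteDimensional K (normalClosure K X Kbar))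

theorem galClosure_sup [Normal K Kbar] (X Y : IntermediateField K Kbar) :
    galClosure K Kbar (X ⊔ Y) = galClosure K Kbar X ⊔ galClosure K Kbar Y :=
  le_antisymm (normalClosure_le_iff_of_normal.2 (sup_le_sup (le_galClosure X) (le_galClosure Y)))
    (sup_le (normalClosure_mono _ _ le_sup_left) (normalClosure_mono _ _ le_sup_right))

theorem finrank_eq_index_fixSub [IsGalois K Kbar] (X : IntermediateField K Kbar) :
    finrank K X = (fixSub K Kbar X).index := by
  rw [fixSub, ← finrank_eq_fixingSubgroup_index, comap_val_eq_restrict (le_galClosure X)]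
  exact (restrictAlgEquiv _).toLinearEquiv.finrank_eq

theorem fixSub_sup [IsGalois K Kbar] {X Y : IntermediateField K Kbar}
    [FiniteDimensional K X] [FiniteDimensional K Y]
    (h : galClosure K Kbar X ⊓ galClosure K Kbar Y = ⊥) :
    fixSub K Kbar (X ⊔ Y) = ((fixSub K Kbar X).prod (fixSub K Kbar Y)).comap
      (restrictGalProdEquiv (galClosure_sup X Y).symm h : _ →* _) :=
  fixingSubgroup_comap_val_sup _ _ (le_galClosure X) (le_galClosure Y)

end galClosure

/-- (General Magnification) Let `M/K` be obtained by strong general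
magnification from `L/K` through `J/K`, with magnification tuple
`(r, s, t, u) = (r_K(J), s_K(J), t_K(J), u_K(J))`.  Then
`[M:K] = r·s·[L:K] = t·u·[L:K]`, `r_K(M) = r·r_K(L)`, `s_K(M) = s·s_K(L)`,
`t_K(M) = t·t_K(L)` and `u_K(M) = u·u_K(L)`. -/
theorem general_magnification_multiplicativity
    (K Kbar : Type*) [Field K] [PerfectField K] [Field Kbar] [Algebra K Kbar]
    [IsAlgClosure K Kbar]
    (M L J : IntermediateField K Kbar) [FiniteDimensional K ↥M]
    (h : IsSGMvia K Kbar M L J) :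
    Module.finrank K ↥M = clusterSize K Kbar J * numClusters K Kbar J * Module.finrank K ↥L ∧
    Module.finrank K ↥M = ascIndex K Kbar J * uIndex K Kbar J * Module.finrank K ↥L ∧
    clusterSize K Kbar M = clusterSize K Kbar J * clusterSize K Kbar L ∧
    numClusters K Kbar M = numClusters K Kbar J * numClusters K Kbar L ∧
    ascIndex K Kbar M = ascIndex K Kbar J * ascIndex K Kbar L ∧
    uIndex K Kbar M = uIndex K Kbar J * uIndex K Kbar L := by
  obtain ⟨hLM, -, hJ, hdisj, rfl⟩ := h
  have : FiniteDimensional K L :=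
    .of_injective (inclusion hLM).toLinearMap (inclusion_injective hLM)
  set e := restrictGalProdEquiv (galClosure_sup L J).symm hdisj
  have hH : (fixSub K Kbar (L ⊔ J)).map (e : _ →* _) =
      (fixSub K Kbar L).prod (fixSub K Kbar J) := by
    rw [fixSub_sup hdisj]
    exact Subgroup.map_comap_eq_self_of_surjective e.surjective _
  have hN := Subgroup.normalizer_map_eq_prod e hH
  have hC := Subgroup.normalClosure_map_eq_prod e hH
  have hdeg : finrank K ↥(L ⊔ J) = finrank K J * finrank K L := by
    rw [finrank_eq_index_fixSub, finrank_eq_index_fixSub, finrank_eq_index_fixSub,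
      Subgroup.index_eq_mul_of_map_eq_prod e hH, mul_comm]
  refine ⟨?_, ?_, ?_, ?_, ?_, ?_⟩
  · rw [hdeg, finrank_eq_index_fixSub J, clusterSize, numClusters,
      Subgroup.relIndex_mul_index Subgroup.le_normalizer]
  · rw [hdeg, finrank_eq_index_fixSub J, mul_comm (ascIndex K Kbar J), ascIndex, uIndex,
      Subgroup.relIndex_mul_index Subgroup.le_normalClosure]
  · rw [clusterSize, clusterSize, clusterSize, Subgroup.relIndex_eq_mul_of_map_eq_prod e hH hN,
      mul_comm]
  · rw [numClusters, numClusters, numClusters, Subgroup.index_eq_mul_of_map_eq_prod e hN, mul_comm]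
  · rw [ascIndex, ascIndex, ascIndex, Subgroup.index_eq_mul_of_map_eq_prod e hC, mul_comm]
  · rw [uIndex, uIndex, uIndex, Subgroup.relIndex_eq_mul_of_map_eq_prod e hH hC, mul_comm]
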